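/- arXiv:1611.07267 — 2 statements merged into one kernel-verified Lean document; each statement's English description precedes it below -/
import Mathlib

section
/- Every Hausdorff sequential space with a dense subset of cardinality at most 𝔠 has cardinality at most 𝔠. -/
open Cardinal Set Topology

universe u

/-- A subset `D` is discrete (as a subspace): every point of `D` has an open
neighbourhood meeting `D` only in that point. -/
def IsDiscreteSubset {X : Type u} [TopologicalSpace X] (D : Set X) : Prop :=
  ∀ x ∈ D, ∃ U : Set X, IsOpen U ∧ U ∩ D = {x}

/-- `X` is almost discretely Lindelöf: every discrete subset is contained in a
Lindelöf subspace. -/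
def AlmostDiscretelyLindelof (X : Type u) [TopologicalSpace X] : Prop :=
  ∀ D : Set X, IsDiscreteSubset D → ∃ L : Set X, IsLindelof L ∧ D ⊆ L

/-- The character of `X` is at most `κ`: every point has an open neighbourhood
base of cardinality at most `κ`. -/
def HasCharacterLE (X : Type u) [TopologicalSpace X] (κ : Cardinal.{u}) : Prop :=
  ∀ x : X, ∃ B : Set (Set X), #B ≤ κ ∧ (∀ U ∈ B, IsOpen U ∧ x ∈ U) ∧
    ∀ V ∈ nhds x, ∃ U ∈ B, U ⊆ V

/-- `R` is right-separated: it carries a well-order in which each point has a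
neighbourhood avoiding all strictly later points (initial segments are open). -/
def RightSeparated {X : Type u} [TopologicalSpace X] (R : Set X) : Prop :=
  ∃ r : R → R → Prop, IsWellOrder R r ∧
    ∀ a : R, ∃ U : Set X, IsOpen U ∧ (a : X) ∈ U ∧ ∀ b : R, (b : X) ∈ U → ¬ r a b

/-- `R` is left-separated: it carries a well-order in which each point has a
neighbourhood avoiding all strictly earlier points (initial segments are closed). -/
def LeftSeparated {X : Type u} [TopologicalSpace X] (R : Set X) : Prop :=
  ∃ r : R → R → Prop, IsWellOrder R r ∧
    ∀ a : R, ∃ U : Set X, IsOpen U ∧ (a : X) ∈ U ∧ ∀ b : R, (b : X) ∈ U → ¬ r b a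

/-- The θ-closure operator: `x ∈ thetaCl A` iff the closure of every open
neighbourhood of `x` meets `A`. -/
def thetaCl {X : Type u} [TopologicalSpace X] (A : Set X) : Set X :=
  {x | ∀ U : Set X, IsOpen U → x ∈ U → (closure U ∩ A).Nonempty}

/-- `A` is θ-closed if it coincides with its θ-closure operator value. -/
def IsThetaClosed {X : Type u} [TopologicalSpace X] (A : Set X) : Prop :=
  thetaCl A = A

/-- `[A]_θ`, the smallest θ-closed set containing `A`. -/
def thetaClosure {X : Type u} [TopologicalSpace X] (A : Set X) : Set X :=
  ⋂₀ {B : Set X | A ⊆ B ∧ IsThetaClosed B}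

/-- A (well-ordered) sequence is free if at every cut the closures of the two
pieces are disjoint. -/
def IsFreeSeq {X : Type u} [TopologicalSpace X] {ι : Type u} [LinearOrder ι]
    (f : ι → X) : Prop :=
  ∀ i : ι, closure (f '' {j | j < i}) ∩ closure (f '' {j | i ≤ j}) = ∅

/-- A (well-ordered) sequence is θ-free if at every cut the θ-closure of the
initial piece is disjoint from the closure of the final piece. -/
def IsThetaFreeSeq {X : Type u} [TopologicalSpace X] {ι : Type u} [LinearOrder ι]
    (f : ι → X) : Prop :=
  ∀ i : ι, thetaClosure (f '' {j | j < i}) ∩ closure (f '' {j | i ≤ j}) = ∅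

/-- A cellular family: pairwise disjoint nonempty open sets. -/
def IsCellularFamily {X : Type u} [TopologicalSpace X] (𝒰 : Set (Set X)) : Prop :=
  (∀ U ∈ 𝒰, IsOpen U ∧ U.Nonempty) ∧ 𝒰.PairwiseDisjoint id

/-- `X` is cellular-Lindelöf: every cellular family admits a Lindelöf subspace
meeting each of its members. -/
def CellularLindelof (X : Type u) [TopologicalSpace X] : Prop :=
  ∀ 𝒰 : Set (Set X), IsCellularFamily 𝒰 →
    ∃ L : Set X, IsLindelof L ∧ ∀ U ∈ 𝒰, (U ∩ L).Nonempty

/-- `lam` is a caliber of `X`: any `lam`-many nonempty open sets include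
`lam`-many with a common point. -/
def IsCaliber (X : Type u) [TopologicalSpace X] (lam : Cardinal.{u}) : Prop :=
  ∀ (ι : Type u) (U : ι → Set X), #ι = lam →
    (∀ i, IsOpen (U i) ∧ (U i).Nonempty) →
    ∃ S : Set ι, #S = lam ∧ (⋂ i ∈ S, U i).Nonempty

/-!
Let `D₀ = D` and let `Dᵢ` add to `D` the limits of convergent sequences from the earlier stages.
A countable sequence of stages is bounded below `ω₁`, since `ω₁` has uncountable cofinality, so
`⋃ i < ω₁, Dᵢ` is sequentially closed, hence closed, hence all of `X`. Limits in a Hausdorff space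
are unique, so a sequential closure of a set of size `≤ 𝔠` has size `≤ 𝔠 ^ ℵ₀ = 𝔠`; by
induction each of the `ℵ₁ ≤ 𝔠` stages has size `≤ 𝔠`.
-/

open Filter Ordinal

section SeqClosureRec

variable {X : Type u} [TopologicalSpace X]

theorem mk_seqClosure_le [T2Space X] (A : Set X) : #(seqClosure A) ≤ #A ^ ℵ₀ := by
  have hseq : ∀ x : seqClosure A, ∃ a : ℕ → A, Tendsto (fun n => (a n : X)) atTop (𝓝 x) := by
    rintro ⟨x, a, ha, hlim⟩
    exact ⟨fun n => ⟨a n, ha n⟩, hlim⟩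
  choose a ha using hseq
  have ha_inj : Function.Injective a := fun x y hxy =>
    Subtype.ext (tendsto_nhds_unique (ha x) (hxy ▸ ha y))
  simpa using mk_le_of_injective ha_inj

def seqClosureRec (D : Set X) (i : Ordinal) : Set X :=
  D ∪ ⋃ j < i, seqClosure (seqClosureRec D j)
termination_by i

variable (D : Set X)

theorem self_subset_seqClosureRec (i : Ordinal) : D ⊆ seqClosureRec D i := by
  rw [seqClosureRec]
  exact subset_union_left

theorem seqClosure_subset_seqClosureRec {i j : Ordinal} (h : j < i) :
    seqClosure (seqClosureRec D j) ⊆ seqClosureRec D i := by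
  rw [seqClosureRec.eq_1 D i]
  exact subset_union_of_subset_right (subset_biUnion_of_mem (u := fun j => seqClosure _) h) _

theorem seqClosureRec_mono : Monotone (seqClosureRec D) := by
  intro j i h
  rcases h.eq_or_lt with rfl | h
  · rfl
  · exact subset_seqClosure.trans (seqClosure_subset_seqClosureRec D h)

theorem isSeqClosed_biUnion_seqClosureRec_omega_one :
    IsSeqClosed (⋃ i < (ω₁ : Ordinal), seqClosureRec D i) := by
  intro a x ha hlim
  simp only [mem_iUnion₂, exists_prop] at ha
  choose I hI haI using ha
  have hsup : ⨆ n, I n < ω₁ := iSup_lt_omega_one hI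
  have hx : x ∈ seqClosure (seqClosureRec D (⨆ n, I n)) :=
    ⟨a, fun n => seqClosureRec_mono D (Ordinal.le_iSup I n) (haI n), hlim⟩
  exact mem_iUnion₂.2 ⟨_, (isSuccLimit_omega 1).succ_lt hsup,
    seqClosure_subset_seqClosureRec D (Order.lt_succ _) hx⟩

theorem mk_seqClosureRec_le [T2Space X] {κ : Cardinal.{u}} (hκ : ℵ₀ ≤ κ) (hκ_pow : κ ^ ℵ₀ = κ)
    (hD : #D ≤ κ) {i : Ordinal.{u}} (hi : i.card ≤ κ) : #(seqClosureRec D i) ≤ κ := by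
  induction i using WellFoundedLT.induction with
  | ind i ih =>
    have hstages : #(⋃ j < i, seqClosure (seqClosureRec D j)) ≤ κ := by
      refine mk_biUnion_le_of_le hi hκ _ fun j hj => ?_
      calc #(seqClosure (seqClosureRec D j)) ≤ #(seqClosureRec D j) ^ ℵ₀ := mk_seqClosure_le _
        _ ≤ κ ^ ℵ₀ := power_le_power_right (ih j hj ((card_le_card hj.le).trans hi))
        _ = κ := hκ_pow
    rw [seqClosureRec]
    exact (mk_union_le _ _).trans (add_le_of_le hκ hD hstages)

end SeqClosureRec

/-- a Hausdorff sequential space with a dense subset of cardinality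
at most `𝔠` has cardinality at most `𝔠`. -/
theorem stmt17 {X : Type u} [TopologicalSpace X] [T2Space X] [SequentialSpace X]
    (D : Set X) (hD : Dense D) (hcard : #D ≤ Cardinal.continuum) :
    #X ≤ Cardinal.continuum := by
  set Y := ⋃ i < (ω₁ : Ordinal.{u}), seqClosureRec D i
  have hDY : D ⊆ Y := fun x hx =>
    mem_iUnion₂.2 ⟨0, omega_pos 1, self_subset_seqClosureRec D 0 hx⟩
  have hY : (univ : Set X) ⊆ Y := by
    rw [← hD.closure_eq]
    exact (isSeqClosed_biUnion_seqClosureRec_omega_one D).isClosed.closure_subset_iff.2 hDY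
  have hω₁ : (ω₁ : Ordinal.{u}).card ≤ 𝔠 := by
    rw [card_omega]
    exact aleph_one_le_continuum
  calc #X = #(univ : Set X) := mk_univ.symm
    _ ≤ #Y := mk_le_mk_of_subset hY
    _ ≤ 𝔠 := mk_biUnion_le_of_le hω₁ aleph0_le_continuum _ fun i hi =>
      mk_seqClosureRec_le D aleph0_le_continuum continuum_power_aleph0 hcard
        ((card_le_card hi.le).trans hω₁)
end

section
/- Let X be an almost discretely Lindelöf space, let g(X) denote the supremum of cardinalities of closures of discrete subsets of X, and let hL(X) denote the hereditary Lindelöf degree. Then hL(X) ≤ g(X), i.e., every right-separated subset of X has cardinality at most g(X). -/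
open Cardinal Set Topology

universe u

/-!
A right-separated set is scattered: in any open set `V` meeting `R`, the first point of `R ∩ V`
in the separating well-order is isolated in `R`. Hence the isolated points of `R` form a discrete
set whose closure contains `R`, and `#R` is bounded by the cardinality of that closure.
-/

section IsolatedPoints

variable {X : Type u} [TopologicalSpace X]

def isolatedPoints (R : Set X) : Set X :=
  {x | x ∈ R ∧ ∃ U : Set X, IsOpen U ∧ U ∩ R = {x}}

theorem isDiscreteSubset_isolatedPoints (R : Set X) : IsDiscreteSubset (isolatedPoints R) := by
  rintro x ⟨hxR, U, hUo, hUR⟩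
  refine ⟨U, hUo, Subset.antisymm ?_ ?_⟩
  · rintro y ⟨hyU, hyR, -⟩
    rw [← hUR]
    exact ⟨hyU, hyR⟩
  · rintro y rfl
    exact ⟨(hUR.symm.subset rfl).1, hxR, U, hUo, hUR⟩

theorem RightSeparated.inter_isolatedPoints_nonempty {R : Set X} (hR : RightSeparated R)
    {V : Set X} (hV : IsOpen V) (hRV : (V ∩ R).Nonempty) :
    (V ∩ isolatedPoints R).Nonempty := by
  obtain ⟨r, hwo, hsep⟩ := hR
  obtain ⟨x, hxV, hxR⟩ := hRV
  obtain ⟨a, haV, hamin⟩ := hwo.wf.has_min {b : R | (b : X) ∈ V} ⟨⟨x, hxR⟩, hxV⟩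
  obtain ⟨U, hUo, haU, hU⟩ := hsep a
  refine ⟨a, haV, a.2, U ∩ V, hUo.inter hV, Subset.antisymm ?_ ?_⟩
  · rintro y ⟨⟨hyU, hyV⟩, hyR⟩
    have hay : a = ⟨y, hyR⟩ := hwo.trichotomous a ⟨y, hyR⟩ (hU _ hyU) (hamin _ hyV)
    exact congrArg Subtype.val hay.symm
  · rintro y rfl
    exact ⟨⟨haU, haV⟩, a.2⟩

theorem RightSeparated.subset_closure_isolatedPoints {R : Set X} (hR : RightSeparated R) :
    R ⊆ closure (isolatedPoints R) := fun x hx =>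
  mem_closure_iff.2 fun _ hV hxV => hR.inter_isolatedPoints_nonempty hV ⟨x, hxV, hx⟩

end IsolatedPoints

theorem stmt19_general {X : Type u} [TopologicalSpace X]
    (R : Set X) (hR : RightSeparated R) :
    #R ≤ ⨆ D : {D : Set X // IsDiscreteSubset D}, #(closure D.1) :=
  calc #R ≤ #(closure (isolatedPoints R)) := mk_le_mk_of_subset hR.subset_closure_isolatedPoints
    _ ≤ _ := le_ciSup bddAbove_of_small
      (⟨isolatedPoints R, isDiscreteSubset_isolatedPoints R⟩ : {D : Set X // IsDiscreteSubset D})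

/-- in an almost discretely Lindelöf space, every right-separated
subset has cardinality at most `g(X)`, the supremum of cardinalities of closures of
discrete subsets; that is, `hL(X) ≤ g(X)`. -/
theorem stmt19 {X : Type u} [TopologicalSpace X] (hADL : AlmostDiscretelyLindelof X)
    (R : Set X) (hR : RightSeparated R) :
    #R ≤ ⨆ D : {D : Set X // IsDiscreteSubset D}, #(closure D.1) :=
  stmt19_general R hR
end
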